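/- Fix an integer A ≥ 1, survival rates η₁, …, η_A with 0 ≤ η_a ≤ 1, a constant mileage M ≥ 0, and a nonnegative cohort emission-factor function φ : ℤ → ℝ, φ ≥ 0, with the emission factor of a vehicle of age a in year t given by ε_a(t) = φ(t − a). Consider the thermal-stock dynamics under a sales ban: S₀(t) = 0 for t ≥ 1, S_a(t) = η_a S_{a−1}(t−1) for 1 ≤ a ≤ A−1, S_A(t) = η_A (S_{A−1}(t−1) + S_A(t−1)), with nonnegative initial stocks S_a(0) ≥ 0. If moreover φ(t − A) ≥ φ(t + 1 − A) for the oldest age class (the emission factor assigned to the capped oldest class does not increase in time), then the yearly emissions E(t) = M Σ_{a=0}^{A} ε_a(t) S_a(t) satisfy E(t+1) ≤ E(t) for every t ≥ 0. -/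

import Mathlib

/-- Under the thermal-sales ban, if the emission factor assigned to the capped oldest
class does not increase in time, the yearly emissions
`E(t) = M Σ_a ε_a(t) S_a(t)` with `ε_a(t) = φ(t − a)` are nonincreasing. -/
theorem stmt_12 (A : ℕ) (hA : 1 ≤ A) (η : ℕ → ℝ)
    (hη : ∀ a : ℕ, 1 ≤ a → a ≤ A → 0 ≤ η a ∧ η a ≤ 1)
    (M : ℝ) (hM : 0 ≤ M) (φ : ℤ → ℝ) (hφ : ∀ z : ℤ, 0 ≤ φ z)
    (ε : ℕ → ℕ → ℝ) (hε : ∀ a t : ℕ, ε a t = φ ((t : ℤ) - (a : ℤ)))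
    (S : ℕ → ℕ → ℝ)
    (hban : ∀ t : ℕ, 1 ≤ t → S 0 t = 0)
    (hmid : ∀ (a t : ℕ), 1 ≤ a → a ≤ A - 1 → 1 ≤ t → S a t = η a * S (a - 1) (t - 1))
    (hold : ∀ t : ℕ, 1 ≤ t → S A t = η A * (S (A - 1) (t - 1) + S A (t - 1)))
    (hinit : ∀ a : ℕ, a ≤ A → 0 ≤ S a 0)
    (hmono : ∀ t : ℕ, φ ((t : ℤ) + 1 - (A : ℤ)) ≤ φ ((t : ℤ) - (A : ℤ)))
    (E : ℕ → ℝ)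
    (hE : ∀ t : ℕ, E t = M * ∑ a ∈ Finset.range (A + 1), ε a t * S a t) :
    ∀ t : ℕ, E (t + 1) ≤ E t := by

  obtain ⟨B, rfl⟩ : ∃ B, A = B + 1 := ⟨A - 1, (Nat.succ_pred_eq_of_pos hA).symm⟩
  have Snn : ∀ t a, a ≤ B + 1 → 0 ≤ S a t := by
    intro t
    induction t with
    | zero => exact fun a ha => hinit a ha
    | succ t ih =>
      intro a ha
      rcases Nat.eq_zero_or_pos a with h0 | hpos
      · rw [h0, hban (t+1) (by omega)]
      · rcases Nat.lt_or_ge a (B+1) with hlt | hge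
        · rw [hmid a (t+1) hpos (by omega) (by omega)]
          simp only [Nat.add_sub_cancel]
          exact mul_nonneg (hη a hpos (by omega)).1 (ih (a-1) (by omega))
        · have hEq : a = B + 1 := le_antisymm ha hge
          subst hEq
          rw [hold (t+1) (by omega)]
          simp only [Nat.add_sub_cancel]
          exact mul_nonneg (hη (B+1) (by omega) le_rfl).1
            (add_nonneg (ih B (by omega)) (ih (B+1) le_rfl))
  intro t
  rw [hE, hE]
  apply mul_le_mul_of_nonneg_left _ hM
  rw [Finset.sum_range_succ' (fun a => ε a (t+1) * S a (t+1)) (B+1)]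
  simp only [hban (t+1) (by omega), mul_zero, add_zero]
  rw [Finset.sum_range_succ (fun i => ε (i+1) (t+1) * S (i+1) (t+1)) B]
  rw [Finset.sum_range_succ (fun a => ε a t * S a t) (B+1),
      Finset.sum_range_succ (fun a => ε a t * S a t) B]
  have h1 : ∀ i ∈ Finset.range B, ε (i+1) (t+1) * S (i+1) (t+1) ≤ ε i t * S i t := by
    intro i hi
    have hi' := Finset.mem_range.mp hi
    rw [hmid (i+1) (t+1) (by omega) (by omega) (by omega)]
    simp only [Nat.add_sub_cancel]
    rw [hε, hε]
    have heq : ((t:ℤ)+1) - ((i:ℤ)+1) = (t:ℤ) - i := by ring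
    push_cast
    rw [heq]
    have hφi := hφ ((t:ℤ) - i)
    have hηi := hη (i+1) (by omega) (by omega)
    have hS := Snn t i (by omega)
    nlinarith [mul_nonneg hφi hS]
  have h2 : ε (B+1) (t+1) * S (B+1) (t+1) ≤ ε B t * S B t + ε (B+1) t * S (B+1) t := by
    rw [hold (t+1) (by omega)]
    simp only [Nat.add_sub_cancel]
    rw [hε, hε, hε]
    have e1 : ((t:ℤ)+1) - ((B:ℤ)+1) = (t:ℤ) - B := by ring
    push_cast
    rw [e1]
    have hm := hmono t
    push_cast at hm
    have hm' : φ ((t:ℤ) - B) ≤ φ ((t:ℤ) - (B+1)) := by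
      have : (t:ℤ) + 1 - ((B:ℤ)+1) = (t:ℤ) - B := by ring
      rwa [this] at hm
    have hηA := hη (B+1) (by omega) le_rfl
    have hSB := Snn t B (by omega)
    have hSA := Snn t (B+1) le_rfl
    have hφ1 := hφ ((t:ℤ) - B)
    have hφ2 := hφ ((t:ℤ) - ((B:ℤ)+1))
    have hφ2' : 0 ≤ φ ((t:ℤ) - (B+1)) := hφ2
    nlinarith [mul_nonneg hφ1 hSB, mul_nonneg hφ1 hSA, mul_nonneg hφ2 hSA,
      mul_nonneg (sub_nonneg.2 hm') hSA,
      mul_nonneg (mul_nonneg (sub_nonneg.2 hm') hSA) hηA.1]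
  have hsum := Finset.sum_le_sum h1
  linarith [hsum, h2]
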